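/- arXiv:1007.0696 — 3 statements merged into one kernel-verified Lean document; each statement's English description precedes it below -/
import Mathlib

section
/- (Theorem 2.2, volume case.) There is a constant M > 0 such that ε^{D−d} λ_d(F_ε) ≤ M for all ε ∈ (0,1]; i.e. the rescaled volumes of the parallel sets of F are uniformly bounded. -/
/-!
Covering `F_ε` by the sets `(S_i F)_ε = S_i (F_{ε/r_i})` gives the renewal inequality
`λ_d(F_ε) ≤ ∑ r_i^d λ_d(F_{ε/r_i})`. Multiplied by `ε^(D-d)` it says that
`f(ε) = ε^(D-d) λ_d(F_ε)` is at most the `r_i^D`-weighted average of the values `f(ε/r_i)`, taken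
at larger scales. Since `D ≤ d`, `f` is bounded on `[min r_i, 1]`, and induction over the scales
`ρ^n`, `ρ = max r_i`, extends the bound to all of `(0, 1]`.
-/

open MeasureTheory Metric Set

/-- `S ∘ (r⁻¹ • ·)` is an isometry, hence affine by Mazur–Ulam, and its injective linear part is
onto in finite dimension. -/
theorem surjective_of_dist_eq_mul {V : Type*} [NormedAddCommGroup V] [NormedSpace ℝ V]
    [StrictConvexSpace ℝ V] [FiniteDimensional ℝ V] {S : V → V} {r : ℝ} (hr : 0 < r)
    (hS : ∀ x y, dist (S x) (S y) = r * dist x y) : Function.Surjective S := by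
  have hT : Isometry fun x => S (r⁻¹ • x) := Isometry.of_dist_eq fun x y => by
    rw [hS, dist_smul₀, Real.norm_of_nonneg (inv_nonneg.2 hr.le), mul_inv_cancel_left₀ hr.ne']
  set A := hT.affineIsometryOfStrictConvexSpace
  have hA := A.toAffineMap.linear_surjective_iff.1 <|
    LinearMap.injective_iff_surjective.1 A.linearIsometry.injective
  exact Function.Surjective.of_comp (g := fun x => r⁻¹ • x) hA

theorem infEDist_image_of_dist_eq_mul {X Y : Type*} [PseudoMetricSpace X] [PseudoMetricSpace Y]
    {S : X → Y} {r : ℝ} (hr : 0 < r) (hS : ∀ x y, dist (S x) (S y) = r * dist x y)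
    (x : X) (A : Set X) : infEDist (S x) (S '' A) = ENNReal.ofReal r * infEDist x A := by
  have hedist : ∀ y, edist (S x) (S y) = ENNReal.ofReal r * edist x y := fun y => by
    rw [edist_dist, edist_dist, hS, ENNReal.ofReal_mul hr.le]
  have hr0 : ENNReal.ofReal r ≠ 0 := ENNReal.ofReal_pos.2 hr |>.ne'
  simp only [infEDist, iInf_image, hedist, ENNReal.mul_iInf_of_ne hr0 ENNReal.ofReal_ne_top]

theorem cthickening_image_subset_image_cthickening {X Y : Type*} [PseudoMetricSpace X]
    [PseudoMetricSpace Y] {S : X → Y} (hSs : Function.Surjective S) {r : ℝ} (hr : 0 < r)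
    (hS : ∀ x y, dist (S x) (S y) = r * dist x y) (ε : ℝ) (A : Set X) :
    cthickening ε (S '' A) ⊆ S '' cthickening (ε / r) A := by
  intro y hy
  obtain ⟨x, rfl⟩ := hSs y
  refine ⟨x, ?_, rfl⟩
  rw [mem_cthickening_iff, infEDist_image_of_dist_eq_mul hr hS] at hy
  rw [mem_cthickening_iff, ENNReal.ofReal_div_of_pos hr, ENNReal.le_div_iff_mul_le
    (Or.inl (ENNReal.ofReal_pos.2 hr).ne') (Or.inl ENNReal.ofReal_ne_top), mul_comm]
  exact hy

theorem cthickening_iUnion_subset {X ι : Type*} [PseudoMetricSpace X] [Finite ι] (δ : ℝ)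
    (f : ι → Set X) : cthickening δ (⋃ i, f i) ⊆ ⋃ i, cthickening δ (f i) := by
  intro x hx
  cases isEmpty_or_nonempty ι
  · simp_all
  obtain ⟨i, hi⟩ := exists_eq_ciInf_of_finite (f := fun i => infEDist x (f i))
  rw [mem_cthickening_iff, infEDist_iUnion, ← hi] at hx
  exact mem_iUnion.2 ⟨i, hx⟩

theorem LipschitzWith.volume_image_le {V : Type*} [NormedAddCommGroup V] [InnerProductSpace ℝ V]
    [FiniteDimensional ℝ V] [MeasurableSpace V] [BorelSpace V] {K : NNReal} {f : V → V}
    (hf : LipschitzWith K f) (s : Set V) :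
    volume (f '' s) ≤ (K : ENNReal) ^ Module.finrank ℝ V * volume s := by
  rw [← InnerProductSpace.euclideanHausdorffMeasure_eq_volume,
    Measure.euclideanHausdorffMeasure_def, Measure.smul_apply, Measure.smul_apply,
    ENNReal.smul_def, ENNReal.smul_def, smul_eq_mul, smul_eq_mul, mul_left_comm]
  gcongr
  simpa only [ENNReal.rpow_natCast] using hf.hausdorffMeasure_image_le (Nat.cast_nonneg _) s

section Recursion

variable {V : Type*} [NormedAddCommGroup V] [InnerProductSpace ℝ V] [FiniteDimensional ℝ V]
  [MeasurableSpace V] [BorelSpace V] {ι : Type*} [Fintype ι] {S : ι → V → V} {r : ι → ℝ}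
  {F : Set V}

theorem volume_cthickening_le_sum (hr : ∀ i, 0 < r i)
    (hS : ∀ i x y, dist (S i x) (S i y) = r i * dist x y) (hF : F ⊆ ⋃ i, S i '' F) (ε : ℝ) :
    volume (cthickening ε F) ≤
      ∑ i, ENNReal.ofReal (r i) ^ Module.finrank ℝ V * volume (cthickening (ε / r i) F) := by
  have hLip : ∀ i, LipschitzWith (r i).toNNReal (S i) := fun i =>
    LipschitzWith.of_dist_le_mul fun x y => by rw [hS, Real.coe_toNNReal _ (hr i).le]
  calc volume (cthickening ε F)
      ≤ volume (⋃ i, cthickening ε (S i '' F)) :=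
        measure_mono <| (cthickening_subset_of_subset ε hF).trans (cthickening_iUnion_subset ε _)
    _ ≤ ∑ i, volume (cthickening ε (S i '' F)) := measure_iUnion_fintype_le _ _
    _ ≤ _ := by
        refine Finset.sum_le_sum fun i _ => ?_
        exact (measure_mono <| cthickening_image_subset_image_cthickening
          (surjective_of_dist_eq_mul (hr i) (hS i)) (hr i) (hS i) ε F).trans
          ((hLip i).volume_image_le _)

theorem volume_cthickening_toReal_le_sum (hr : ∀ i, 0 < r i)
    (hS : ∀ i x y, dist (S i x) (S i y) = r i * dist x y) (hFb : Bornology.IsBounded F)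
    (hF : F ⊆ ⋃ i, S i '' F) (ε : ℝ) :
    (volume (cthickening ε F)).toReal ≤
      ∑ i, r i ^ Module.finrank ℝ V * (volume (cthickening (ε / r i) F)).toReal := by
  have hfin : ∀ δ, volume (cthickening δ F) ≠ ⊤ := fun δ => hFb.cthickening.measure_lt_top.ne
  refine (ENNReal.toReal_mono ?_ (volume_cthickening_le_sum hr hS hF ε)).trans_eq ?_
  · exact ENNReal.sum_ne_top.2 fun i _ => ENNReal.mul_ne_top (by simp) (hfin _)
  · rw [ENNReal.toReal_sum fun i _ => ENNReal.mul_ne_top (by simp) (hfin _)]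
    simp only [ENNReal.toReal_mul, ENNReal.toReal_pow, ENNReal.toReal_ofReal (hr _).le]

end Recursion

theorem le_of_le_sum_mul_div {ι : Type*} [Fintype ι] {r w : ι → ℝ}
    (hr : ∀ i, r i ∈ Ioo 0 1) (hw : ∀ i, 0 ≤ w i) (hw1 : ∑ i, w i = 1) {f : ℝ → ℝ} {M : ℝ}
    (hrec : ∀ ε ∈ Ioc 0 1, (∀ i, ε ≤ r i) → f ε ≤ ∑ i, w i * f (ε / r i))
    (hbase : ∀ ε ∈ Ioc 0 1, (∃ i, r i < ε) → f ε ≤ M) :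
    ∀ ε ∈ Ioc 0 1, f ε ≤ M := by
  have : Nonempty ι := by
    by_contra h
    simp [not_nonempty_iff.1 h] at hw1
  obtain ⟨i₀, hi₀⟩ := Finite.exists_max r
  set ρ := r i₀
  suffices key : ∀ n : ℕ, ∀ ε ∈ Ioc 0 1, ρ ^ n ≤ ε → f ε ≤ M by
    intro ε hε
    obtain ⟨n, hn⟩ := exists_pow_lt_of_lt_one hε.1 (hr i₀).2
    exact key n ε hε hn.le
  intro n
  induction n with
  | zero =>
    intro ε hε hρε
    exact hbase ε hε ⟨i₀, (hr i₀).2.trans_le (by simpa using hρε)⟩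
  | succ n ih =>
    intro ε hε hρε
    by_cases hsmall : ∃ i, r i < ε
    · exact hbase ε hε hsmall
    simp only [not_exists, not_lt] at hsmall
    have hdiv : ∀ i, ε / r i ∈ Ioc 0 1 ∧ ρ ^ n ≤ ε / r i := fun i =>
      have hri := (hr i).1
      ⟨⟨div_pos hε.1 hri, (div_le_one hri).2 (hsmall i)⟩,
        (le_div_iff₀ hri).2 <| calc
          ρ ^ n * r i ≤ ρ ^ n * ρ := mul_le_mul_of_nonneg_left (hi₀ i) (pow_nonneg (hr i₀).1.le n)
          _ = ρ ^ (n + 1) := (pow_succ ρ n).symm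
          _ ≤ ε := hρε⟩
    calc f ε ≤ ∑ i, w i * f (ε / r i) := hrec ε hε hsmall
      _ ≤ ∑ i, w i * M := Finset.sum_le_sum fun i _ =>
          mul_le_mul_of_nonneg_left (ih _ (hdiv i).1 (hdiv i).2) (hw i)
      _ = M := by rw [← Finset.sum_mul, hw1, one_mul]

theorem rpow_sub_natCast_mul_pow {ε r : ℝ} (hε : 0 ≤ ε) (hr : 0 < r) (D : ℝ) (d : ℕ) :
    ε ^ (D - d) * r ^ d = r ^ D * (ε / r) ^ (D - d) := by
  rw [Real.div_rpow hε hr.le, Real.rpow_sub hr, ← Real.rpow_natCast]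
  field_simp

theorem rescaled_parallel_volume_uniformly_bounded_general
    (d N : ℕ)
    (S : Fin N → EuclideanSpace ℝ (Fin d) → EuclideanSpace ℝ (Fin d))
    (r : Fin N → ℝ) (hr : ∀ i, r i ∈ Set.Ioo (0 : ℝ) 1)
    (hS : ∀ i x y, dist (S i x) (S i y) = r i * dist x y)
    (F : Set (EuclideanSpace ℝ (Fin d))) (hFc : IsCompact F)
    (hFinv : F = ⋃ i, S i '' F)
    (D : ℝ) (hDd : D ≤ d) (hDsum : ∑ i, r i ^ D = 1) :
    ∃ M : ℝ, 0 < M ∧ ∀ ε ∈ Set.Ioc (0 : ℝ) 1,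
      ε ^ (D - d) * (volume (Metric.cthickening ε F)).toReal ≤ M := by
  set V : ℝ → ℝ := fun ε => (volume (cthickening ε F)).toReal
  have hVmono : Monotone V := fun a b hab =>
    ENNReal.toReal_mono hFc.isBounded.cthickening.measure_lt_top.ne
      (measure_mono (cthickening_mono hab F))
  have hVrec : ∀ ε, V ε ≤ ∑ i, r i ^ d * V (ε / r i) := by
    simpa only [finrank_euclideanSpace_fin] using volume_cthickening_toReal_le_sum
      (fun i => (hr i).1) hS hFc.isBounded hFinv.subset
  have hrpow_nonneg : ∀ i (p : ℝ), 0 ≤ r i ^ p := fun i p => Real.rpow_nonneg (hr i).1.le p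
  set M₀ := (∑ i, r i ^ (D - d)) * V 1
  have hsum_nonneg : 0 ≤ ∑ i, r i ^ (D - d) := Finset.sum_nonneg fun i _ => hrpow_nonneg i _
  have hM₀ : 0 ≤ M₀ := mul_nonneg hsum_nonneg ENNReal.toReal_nonneg
  refine ⟨M₀ + 1, by positivity, fun ε hε => ?_⟩
  refine (le_of_le_sum_mul_div (f := fun δ => δ ^ (D - d) * V δ) hr (fun i => hrpow_nonneg i D)
    hDsum (fun δ hδ _ => ?_) (fun δ hδ ⟨i, hi⟩ => ?_) ε hε).trans
    (le_add_of_nonneg_right zero_le_one)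
  · calc δ ^ (D - d) * V δ ≤ δ ^ (D - d) * ∑ i, r i ^ d * V (δ / r i) :=
        mul_le_mul_of_nonneg_left (hVrec δ) (Real.rpow_nonneg hδ.1.le _)
      _ = ∑ i, r i ^ D * ((δ / r i) ^ (D - d) * V (δ / r i)) := by
        simp only [Finset.mul_sum, ← mul_assoc, rpow_sub_natCast_mul_pow hδ.1.le (hr _).1]
  · have hrpow : δ ^ (D - d) ≤ ∑ j, r j ^ (D - d) :=
      (Real.rpow_le_rpow_of_nonpos (hr i).1 hi.le (sub_nonpos.2 hDd)).trans
        (Finset.single_le_sum (fun j _ => hrpow_nonneg j _) (Finset.mem_univ i))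
    exact mul_le_mul hrpow (hVmono hδ.2) ENNReal.toReal_nonneg hsum_nonneg

/-- Theorem 2.2 of Winter–Zähle, volume case: the rescaled volumes of the parallel
sets of a self-similar set satisfying OSC are uniformly bounded for `ε ∈ (0,1]`. -/
theorem rescaled_parallel_volume_uniformly_bounded
    (d N : ℕ) (hd : 1 ≤ d) (hN : 2 ≤ N)
    (S : Fin N → EuclideanSpace ℝ (Fin d) → EuclideanSpace ℝ (Fin d))
    (r : Fin N → ℝ) (hr : ∀ i, r i ∈ Set.Ioo (0 : ℝ) 1)
    (hS : ∀ i x y, dist (S i x) (S i y) = r i * dist x y)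
    (F : Set (EuclideanSpace ℝ (Fin d))) (hFne : F.Nonempty) (hFc : IsCompact F)
    (hFinv : F = ⋃ i, S i '' F)
    (hOSC : ∃ O : Set (EuclideanSpace ℝ (Fin d)), O.Nonempty ∧ IsOpen O ∧
      Bornology.IsBounded O ∧ (⋃ i, S i '' O) ⊆ O ∧
      ∀ i j, i ≠ j → Disjoint (S i '' O) (S j '' O))
    (D : ℝ) (hD : 0 < D) (hDd : D ≤ d) (hDsum : ∑ i, r i ^ D = 1) :
    ∃ M : ℝ, 0 < M ∧ ∀ ε ∈ Set.Ioc (0 : ℝ) 1,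
      ε ^ (D - d) * (volume (Metric.cthickening ε F)).toReal ≤ M :=
  rescaled_parallel_volume_uniformly_bounded_general d N S r hr hS F hFc hFinv D hDd hDsum
end

section
/- (Theorem 2.2, surface area case.) There is a constant M > 0 such that ε^{D−d+1} H^{d−1}(∂F_ε) ≤ M for all ε ∈ (0,1]; i.e. the rescaled surface areas of the parallel sets of F are uniformly bounded. -/
/-!
Self-similarity bounds the number of `δ`-balls needed to cover `F` by `A δ^{-D}`: a `δ`-cover is
obtained by mapping `(δ / r i)`-covers of `F` under the `S i`, and `∑ r_i^D = 1` preserves the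
bound, so it propagates from coarse scales down to all `δ ≤ 1`.

The boundary of `F_ε` lies in the level set `{x | dist(x, F) = ε}`. If `p ∈ F` is a foot point of
`z` in this level set, then `|z' - p| ≥ ε = |z - p|` for every other `z'` in it, which gives
`⟪z' - z, z - p⟫ ≥ -|z' - z|² / 2`. So the level-set points whose foot point lies in a fixed
`ε/8`-ball and whose unit normal `(z - p)/ε` is `1/8`-close to a fixed direction `v` form a
Lipschitz graph over `v^⊥` inside a ball of radius `ε/4`, hence have `H^{d-1}`-measure `≲ ε^{d-1}`.
Finitely many directions `v` suffice, so `H^{d-1}(∂F_ε) ≲ ε^{-D} ε^{d-1}`.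
-/

open MeasureTheory Metric Set Module
open scoped NNReal ENNReal RealInnerProductSpace

section SelfSimilarCover

variable {α ι : Type*} [PseudoMetricSpace α] {S : ι → α → α} {r : ι → ℝ}
  {F : Set α}

lemma exists_ball_cover_of_exists_ball_cover_div [Fintype ι]
    (hr : ∀ i, 0 < r i) (hS : ∀ i x y, dist (S i x) (S i y) ≤ r i * dist x y)
    (hFS : F ⊆ ⋃ i, S i '' F) {D : ℝ} (hDsum : ∑ i, r i ^ D = 1) {ε A : ℝ} (hε : 0 < ε)
    (h : ∀ i, ∃ T : Finset α, F ⊆ ⋃ t ∈ T, ball t (ε / r i) ∧ (T.card : ℝ) * (ε / r i) ^ D ≤ A) :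
    ∃ T : Finset α, F ⊆ ⋃ t ∈ T, ball t ε ∧ (T.card : ℝ) * ε ^ D ≤ A := by
  classical
  choose T hTcov hTcard using h
  refine ⟨Finset.univ.biUnion fun i ↦ (T i).image (S i), fun x hx ↦ ?_, ?_⟩
  · obtain ⟨i, y, hy, rfl⟩ := mem_iUnion.mp (hFS hx)
    obtain ⟨t, ht, hyt⟩ := mem_iUnion₂.mp (hTcov i hy)
    refine mem_iUnion₂.mpr ⟨S i t, by simpa using ⟨i, t, ht, rfl⟩, ?_⟩
    calc dist (S i y) (S i t) ≤ r i * dist y t := hS i y t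
      _ < r i * (ε / r i) := mul_lt_mul_of_pos_left (mem_ball.mp hyt) (hr i)
      _ = ε := mul_div_cancel₀ ε (hr i).ne'
  · calc ((Finset.univ.biUnion fun i ↦ (T i).image (S i)).card : ℝ) * ε ^ D
        ≤ (∑ i, ((T i).card : ℝ)) * ε ^ D := by
          gcongr
          exact_mod_cast Finset.card_biUnion_le.trans
            (Finset.sum_le_sum fun i _ ↦ Finset.card_image_le)
      _ = ∑ i, ((T i).card : ℝ) * (ε / r i) ^ D * r i ^ D := by
          rw [Finset.sum_mul]
          refine Finset.sum_congr rfl fun i _ ↦ ?_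
          rw [mul_assoc, ← Real.mul_rpow (div_nonneg hε.le (hr i).le) (hr i).le,
            div_mul_cancel₀ ε (hr i).ne']
      _ ≤ ∑ i, A * r i ^ D :=
          Finset.sum_le_sum fun i _ ↦
            mul_le_mul_of_nonneg_right (hTcard i) (Real.rpow_nonneg (hr i).le D)
      _ = A := by rw [← Finset.mul_sum, hDsum, mul_one]

theorem exists_ball_cover_card_mul_rpow_le [Fintype ι]
    (hr : ∀ i, r i ∈ Ioo (0 : ℝ) 1) (hS : ∀ i x y, dist (S i x) (S i y) ≤ r i * dist x y)
    (hF : TotallyBounded F) (hFS : F ⊆ ⋃ i, S i '' F) {D : ℝ} (hD : 0 ≤ D)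
    (hDsum : ∑ i, r i ^ D = 1) :
    ∃ A : ℝ, ∀ ε ∈ Ioc (0 : ℝ) 1,
      ∃ T : Finset α, F ⊆ ⋃ t ∈ T, ball t ε ∧ (T.card : ℝ) * ε ^ D ≤ A := by
  have : Nonempty ι := by
    by_contra h
    simp [not_nonempty_iff.mp h] at hDsum
  obtain ⟨imin, himin⟩ := Finite.exists_min r
  obtain ⟨imax, himax⟩ := Finite.exists_max r
  set ρ := r imin
  set q := r imax
  have hρ : 0 < ρ := (hr imin).1
  have hq : 0 < q := (hr imax).1
  obtain ⟨T₀, hT₀fin, hT₀⟩ := Metric.totallyBounded_iff.mp hF ρ hρ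
  lift T₀ to Finset α using hT₀fin
  refine ⟨T₀.card, ?_⟩
  -- `T₀` handles the scales `ε ≥ ρ`; a finer scale `ε` reduces to the coarser scales `ε / r i ≤ 1`.
  have key : ∀ n : ℕ, ∀ ε ∈ Ioc (0 : ℝ) 1, ρ * q ^ n ≤ ε →
      ∃ T : Finset α, F ⊆ ⋃ t ∈ T, ball t ε ∧ (T.card : ℝ) * ε ^ D ≤ T₀.card := by
    intro n
    induction n with
    | zero =>
      rintro ε ⟨hε, hε1⟩ hρε
      refine ⟨T₀, fun x hx ↦ ?_, ?_⟩
      · obtain ⟨t, ht, hxt⟩ := mem_iUnion₂.mp (hT₀ hx)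
        exact mem_iUnion₂.mpr ⟨t, ht, ball_subset_ball (by simpa using hρε) hxt⟩
      · exact mul_le_of_le_one_right (by positivity) (Real.rpow_le_one hε.le hε1 hD)
    | succ n ih =>
      rintro ε ⟨hε, hε1⟩ hρε
      rcases le_or_gt ρ ε with hρε' | hερ
      · exact ih ε ⟨hε, hε1⟩
          ((mul_le_of_le_one_right hρ.le (pow_le_one₀ hq.le (hr imax).2.le)).trans hρε')
      refine exists_ball_cover_of_exists_ball_cover_div (fun i ↦ (hr i).1) hS hFS hDsum hε
        fun i ↦ ih (ε / r i) ⟨div_pos hε (hr i).1, ?_⟩ ?_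
      · rw [div_le_one (hr i).1]; exact (hερ.trans_le (himin i)).le
      · calc ρ * q ^ n ≤ ε / q := by rw [le_div_iff₀ hq, mul_assoc, ← pow_succ]; exact hρε
          _ ≤ ε / r i := div_le_div_of_nonneg_left hε.le (hr i).1 (himax i)
  rintro ε hε
  obtain ⟨n, hn⟩ := exists_pow_lt_of_lt_one (div_pos hε.1 hρ) (hr imax).2
  exact key n ε hε (by rw [← le_div_iff₀' hρ]; exact hn.le)

end SelfSimilarCover

lemma hausdorffMeasure_le_of_dist_le_mul_dist {X Y : Type*} [MetricSpace X] [MeasurableSpace X]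
    [BorelSpace X] [MetricSpace Y] [MeasurableSpace Y] [BorelSpace Y] {s : Set X} {f : X → Y}
    {K : ℝ≥0} {d : ℝ} (hd : 0 ≤ d) (h : ∀ x ∈ s, ∀ y ∈ s, dist x y ≤ K * dist (f x) (f y)) :
    μH[d] s ≤ (K : ℝ≥0∞) ^ d * μH[d] (f '' s) := by
  have hf : AntilipschitzWith K (f ∘ (↑) : s → Y) :=
    AntilipschitzWith.of_le_mul_dist fun x y ↦ h x x.2 y y.2
  have hs : μH[d] (((↑) : s → X) '' univ) = μH[d] (univ : Set s) :=
    isometry_subtype_coe.hausdorffMeasure_image (Or.inl hd) _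
  rw [image_univ, Subtype.range_coe] at hs
  rw [hs]
  simpa only [image_univ, range_comp, Subtype.range_coe] using hf.le_hausdorffMeasure_image hd univ

section InnerProductSpace

variable {E : Type*} [NormedAddCommGroup E] [InnerProductSpace ℝ E]

lemma norm_le_two_mul_norm_orthogonalProjectionOnto_orthogonal {v w : E} (hv : ‖v‖ = 1)
    (hw : |⟪v, w⟫| ≤ 3 / 8 * ‖w‖) : ‖w‖ ≤ 2 * ‖(ℝ ∙ v)ᗮ.orthogonalProjectionOnto w‖ := by
  have hpyth := (ℝ ∙ v).norm_sq_eq_add_norm_sq_projection w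
  have hline : ‖(ℝ ∙ v).orthogonalProjectionOnto w‖ = |⟪v, w⟫| := by
    change ‖(ℝ ∙ v).starProjection w‖ = _
    rw [Submodule.starProjection_unit_singleton ℝ hv, norm_smul, hv, mul_one, Real.norm_eq_abs]
  rw [hline, sq_abs] at hpyth
  nlinarith [norm_nonneg w, norm_nonneg ((ℝ ∙ v)ᗮ.orthogonalProjectionOnto w), abs_nonneg ⟪v, w⟫,
    sq_abs ⟪v, w⟫]

lemma finrank_orthogonal_span_singleton_eq [FiniteDimensional ℝ E] {v : E} (hv : v ≠ 0) :
    finrank ℝ (ℝ ∙ v)ᗮ = finrank ℝ E - 1 := by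
  have := (ℝ ∙ v).finrank_add_finrank_orthogonal
  rw [finrank_span_singleton hv] at this
  omega

theorem exists_hausdorffMeasure_le_of_abs_inner_le [FiniteDimensional ℝ E] [MeasurableSpace E]
    [BorelSpace E] {v : E} (hv : ‖v‖ = 1) :
    ∃ K : ℝ≥0∞, K ≠ ∞ ∧ ∀ (s : Set E) (c : E) (ρ : ℝ), 0 ≤ ρ → s ⊆ closedBall c ρ →
      (∀ z ∈ s, ∀ z' ∈ s, |⟪v, z' - z⟫| ≤ 3 / 8 * ‖z' - z‖) →
      μH[(finrank ℝ E - 1 : ℕ)] s ≤ K * ENNReal.ofReal (ρ ^ (finrank ℝ E - 1)) := by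
  rw [← finrank_orthogonal_span_singleton_eq (norm_ne_zero_iff.mp (by rw [hv]; exact one_ne_zero))]
  set V := (ℝ ∙ v)ᗮ
  set P := V.orthogonalProjectionOnto
  refine ⟨2 ^ (finrank ℝ V : ℝ) * μH[finrank ℝ V] (closedBall (0 : V) 1),
    ENNReal.mul_ne_top (by simp) measure_closedBall_lt_top.ne, fun s c ρ hρ hsc hs ↦ ?_⟩
  have hP : ∀ z ∈ s, ∀ z' ∈ s, dist z z' ≤ (2 : ℝ≥0) * dist (P z) (P z') := by
    intro z hz z' hz'
    rw [dist_eq_norm, dist_eq_norm, ← map_sub, ← norm_neg, neg_sub, ← norm_neg (P _), ← map_neg,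
      neg_sub]
    exact norm_le_two_mul_norm_orthogonalProjectionOnto_orthogonal hv (hs z hz z' hz')
  have hPs : P '' s ⊆ closedBall (P c) ρ := by
    simpa using ((V.lipschitzWith_orthogonalProjectionOnto.mapsTo_closedBall c ρ).mono_left
      hsc).image_subset
  calc μH[finrank ℝ V] s ≤ (2 : ℝ≥0∞) ^ (finrank ℝ V : ℝ) * μH[finrank ℝ V] (P '' s) := by
        exact_mod_cast hausdorffMeasure_le_of_dist_le_mul_dist (Nat.cast_nonneg _) hP
    _ ≤ 2 ^ (finrank ℝ V : ℝ) * μH[finrank ℝ V] (closedBall (P c) ρ) := by gcongr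
    _ = _ := by rw [Measure.addHaar_closedBall' _ _ hρ]; ring

lemma neg_mul_norm_le_inner_of_norm_sub_eq {ε : ℝ} (hε : 0 < ε) {p z z' v : E}
    (hz : ‖z - p‖ = ε) (hz' : ε ≤ ‖z' - p‖) (hv : ‖ε⁻¹ • (z - p) - v‖ ≤ 1 / 8)
    (hzz' : ‖z' - z‖ ≤ ε / 2) : -(3 / 8 * ‖z' - z‖) ≤ ⟪v, z' - z⟫ := by
  set w := z' - z
  have hexpand : ‖z' - p‖ ^ 2 = ‖w‖ ^ 2 + 2 * ⟪w, z - p⟫ + ‖z - p‖ ^ 2 := by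
    rw [← norm_add_sq_real, sub_add_sub_cancel]
  have hfoot : -‖w‖ ^ 2 ≤ 2 * ⟪z - p, w⟫ := by
    rw [real_inner_comm]; nlinarith
  have hsplit : ε * ⟪v, w⟫ = ⟪z - p, w⟫ - ε * ⟪ε⁻¹ • (z - p) - v, w⟫ := by
    rw [inner_sub_left _ v, real_inner_smul_left]; field_simp; ring
  have hnear : ⟪ε⁻¹ • (z - p) - v, w⟫ ≤ 1 / 8 * ‖w‖ :=
    (real_inner_le_norm _ _).trans (mul_le_mul_of_nonneg_right hv (norm_nonneg w))
  have hw : ‖w‖ ^ 2 ≤ ε / 2 * ‖w‖ := by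
    rw [sq]; exact mul_le_mul_of_nonneg_right hzz' (norm_nonneg w)
  nlinarith

lemma abs_inner_sub_le_of_infDist_eq {F : Set E} {ε : ℝ} (hε : 0 < ε) {p p' z z' v : E}
    (hp : p ∈ F) (hp' : p' ∈ F) (hz : infDist z F = ε) (hz' : infDist z' F = ε)
    (hzp : dist z p = ε) (hzp' : dist z' p' = ε)
    (hv : ‖ε⁻¹ • (z - p) - v‖ ≤ 1 / 8) (hv' : ‖ε⁻¹ • (z' - p') - v‖ ≤ 1 / 8)
    (hzz' : ‖z' - z‖ ≤ ε / 2) : |⟪v, z' - z⟫| ≤ 3 / 8 * ‖z' - z‖ := by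
  rw [dist_eq_norm] at hzp hzp'
  have h := neg_mul_norm_le_inner_of_norm_sub_eq hε hzp (hz' ▸ dist_eq_norm z' p ▸
    infDist_le_dist_of_mem hp) hv hzz'
  have h' := neg_mul_norm_le_inner_of_norm_sub_eq hε hzp' (hz ▸ dist_eq_norm z p' ▸
    infDist_le_dist_of_mem hp') hv' (by rwa [norm_sub_rev])
  rw [← neg_sub, inner_neg_right, norm_neg] at h'
  exact abs_le.mpr ⟨h, by linarith⟩

lemma dist_add_smul_le_of_dist_le {ε : ℝ} (hε : 0 < ε) {z p t v : E} (hpt : dist p t ≤ ε / 8)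
    (hv : ‖ε⁻¹ • (z - p) - v‖ ≤ 1 / 8) : dist z (t + ε • v) ≤ ε / 4 := by
  have hdecomp : z - (t + ε • v) = (p - t) + ε • (ε⁻¹ • (z - p) - v) := by
    rw [smul_sub, smul_smul, mul_inv_cancel₀ hε.ne', one_smul]; abel
  rw [dist_eq_norm, hdecomp]
  refine (norm_add_le _ _).trans ?_
  rw [norm_smul, Real.norm_of_nonneg hε.le, ← dist_eq_norm]
  nlinarith

theorem exists_hausdorffMeasure_infDist_eq_le [FiniteDimensional ℝ E] [MeasurableSpace E]
    [BorelSpace E] {F : Set E} (hF : IsClosed F) (hFne : F.Nonempty) :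
    ∃ C : ℝ≥0∞, C ≠ ∞ ∧ ∀ ε > 0, ∀ T : Finset E, F ⊆ ⋃ t ∈ T, ball t (ε / 8) →
      μH[(finrank ℝ E - 1 : ℕ)] {x | infDist x F = ε} ≤
        T.card * C * ENNReal.ofReal (ε ^ (finrank ℝ E - 1)) := by
  obtain ⟨U, hUs, hUfin, hUcov⟩ :=
    finite_cover_balls_of_compact (isCompact_sphere (0 : E) 1) (by norm_num : (0 : ℝ) < 1 / 8)
  lift U to Finset E using hUfin
  choose! K hKtop hK using fun v (hv : v ∈ U) ↦
    exists_hausdorffMeasure_le_of_abs_inner_le (v := v) (by simpa using hUs hv)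
  refine ⟨∑ v ∈ U, K v, ENNReal.sum_ne_top.mpr hKtop, fun ε hε T hT ↦ ?_⟩
  choose p hpF hpd using hF.exists_infDist_eq_dist hFne
  let piece (t v : E) : Set E :=
    {z | infDist z F = ε ∧ ‖ε⁻¹ • (z - p z) - v‖ ≤ 1 / 8} ∩ closedBall (t + ε • v) (ε / 4)
  have hcover : {x | infDist x F = ε} ⊆ ⋃ t ∈ T, ⋃ v ∈ U, piece t v := by
    intro z hz
    have hzp : ‖z - p z‖ = ε := by rw [← dist_eq_norm, ← hpd]; exact hz
    obtain ⟨t, ht, hpt⟩ := mem_iUnion₂.mp (hT (hpF z))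
    have hn : ε⁻¹ • (z - p z) ∈ sphere (0 : E) 1 := by
      simp [norm_smul, hzp, hε.ne', abs_of_pos hε]
    obtain ⟨v, hv, hnv⟩ := mem_iUnion₂.mp (hUcov hn)
    rw [mem_ball, dist_eq_norm] at hnv
    exact mem_iUnion₂.mpr ⟨t, ht, mem_iUnion₂.mpr ⟨v, hv, ⟨hz, hnv.le⟩,
      dist_add_smul_le_of_dist_le hε (mem_ball.mp hpt).le hnv.le⟩⟩
  have hpiece : ∀ t, ∀ v ∈ U, μH[(finrank ℝ E - 1 : ℕ)] (piece t v) ≤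
      K v * ENNReal.ofReal (ε ^ (finrank ℝ E - 1)) := by
    intro t v hv
    refine (hK v hv _ (t + ε • v) (ε / 4) (by positivity) inter_subset_right ?_).trans ?_
    · rintro z ⟨⟨hz, hzv⟩, hzc⟩ z' ⟨⟨hz', hz'v⟩, hz'c⟩
      refine abs_inner_sub_le_of_infDist_eq hε (hpF z) (hpF z') hz hz' (by rw [← hpd, hz])
        (by rw [← hpd, hz']) hzv hz'v ?_
      rw [← dist_eq_norm]
      linarith [dist_triangle_right z' z (t + ε • v), mem_closedBall.mp hzc, mem_closedBall.mp hz'c]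
    · gcongr; linarith
  calc μH[(finrank ℝ E - 1 : ℕ)] {x | infDist x F = ε}
      ≤ ∑ t ∈ T, ∑ v ∈ U, μH[(finrank ℝ E - 1 : ℕ)] (piece t v) :=
        (measure_mono hcover).trans <| (measure_biUnion_finset_le _ _).trans <|
          Finset.sum_le_sum fun t _ ↦ measure_biUnion_finset_le _ _
    _ ≤ ∑ t ∈ T, ∑ v ∈ U, K v * ENNReal.ofReal (ε ^ (finrank ℝ E - 1)) := by
        gcongr with t _ v hv; exact hpiece t v hv
    _ = T.card * (∑ v ∈ U, K v) * ENNReal.ofReal (ε ^ (finrank ℝ E - 1)) := by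
        rw [Finset.sum_const, nsmul_eq_mul, ← Finset.sum_mul, mul_assoc]

end InnerProductSpace

lemma frontier_cthickening_subset_infDist_eq {α : Type*} [PseudoMetricSpace α] (F : Set α)
    {ε : ℝ} (hε : 0 ≤ ε) : frontier (cthickening ε F) ⊆ {x | infDist x F = ε} := fun x hx ↦ by
  have h : infEDist x F = ENNReal.ofReal ε := frontier_cthickening_subset F hx
  change infDist x F = ε
  rw [infDist, h, ENNReal.toReal_ofReal hε]

theorem rescaled_parallel_surface_uniformly_bounded_general
    (d N : ℕ) (hd : 1 ≤ d)
    (S : Fin N → EuclideanSpace ℝ (Fin d) → EuclideanSpace ℝ (Fin d))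
    (r : Fin N → ℝ) (hr : ∀ i, r i ∈ Set.Ioo (0 : ℝ) 1)
    (hS : ∀ i x y, dist (S i x) (S i y) = r i * dist x y)
    (F : Set (EuclideanSpace ℝ (Fin d))) (hFne : F.Nonempty) (hFc : IsCompact F)
    (hFinv : F = ⋃ i, S i '' F)
    (D : ℝ) (hD : 0 < D) (hDsum : ∑ i, r i ^ D = 1) :
    ∃ M : ℝ, 0 < M ∧ ∀ ε ∈ Set.Ioc (0 : ℝ) 1,
      ENNReal.ofReal (ε ^ (D - d + 1)) *
        μH[((d : ℝ) - 1)] (frontier (Metric.cthickening ε F)) ≤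
        ENNReal.ofReal M := by
  obtain ⟨A, hA⟩ := exists_ball_cover_card_mul_rpow_le hr (fun i x y ↦ (hS i x y).le)
    hFc.totallyBounded hFinv.subset hD.le hDsum
  obtain ⟨C, hCtop, hC⟩ := exists_hausdorffMeasure_infDist_eq_le hFc.isClosed hFne
  rw [finrank_euclideanSpace_fin] at hC
  have hdim : ((d - 1 : ℕ) : ℝ) = d - 1 := by rw [Nat.cast_sub hd, Nat.cast_one]
  set K := ENNReal.ofReal (A * 8 ^ D) * C
  have hKtop : K ≠ ∞ := ENNReal.mul_ne_top ENNReal.ofReal_ne_top hCtop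
  refine ⟨K.toReal + 1, by positivity, ?_⟩
  rintro ε ⟨hε, hε1⟩
  obtain ⟨T, hTcov, hTcard⟩ := hA (ε / 8) ⟨by positivity, by linarith⟩
  have hscale : ε ^ (D - d + 1) * ε ^ (d - 1) = (ε / 8) ^ D * 8 ^ D := by
    rw [← Real.rpow_natCast, ← Real.rpow_add hε, hdim, Real.div_rpow hε.le (by norm_num),
      div_mul_cancel₀ _ (by positivity)]
    ring_nf
  calc ENNReal.ofReal (ε ^ (D - d + 1)) * μH[((d : ℝ) - 1)] (frontier (cthickening ε F))
      ≤ ENNReal.ofReal (ε ^ (D - d + 1)) * (T.card * C * ENNReal.ofReal (ε ^ (d - 1))) := by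
        rw [← hdim]
        gcongr
        exact (measure_mono (frontier_cthickening_subset_infDist_eq F hε.le)).trans
          (hC ε hε T hTcov)
    _ = ENNReal.ofReal (T.card * (ε ^ (D - d + 1) * ε ^ (d - 1))) * C := by
        rw [ENNReal.ofReal_mul (Nat.cast_nonneg _), ENNReal.ofReal_mul (by positivity),
          ENNReal.ofReal_natCast]
        ring
    _ ≤ ENNReal.ofReal (A * 8 ^ D) * C := by
        rw [hscale, ← mul_assoc]
        gcongr
    _ ≤ ENNReal.ofReal (K.toReal + 1) :=
        (ENNReal.le_ofReal_iff_toReal_le hKtop (by positivity)).mpr (by linarith)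

/-- Theorem 2.2 of Winter–Zähle, surface area case: the rescaled surface areas of
the parallel sets of a self-similar set satisfying OSC are uniformly bounded for
`ε ∈ (0,1]`. -/
theorem rescaled_parallel_surface_uniformly_bounded
    (d N : ℕ) (hd : 1 ≤ d) (hN : 2 ≤ N)
    (S : Fin N → EuclideanSpace ℝ (Fin d) → EuclideanSpace ℝ (Fin d))
    (r : Fin N → ℝ) (hr : ∀ i, r i ∈ Set.Ioo (0 : ℝ) 1)
    (hS : ∀ i x y, dist (S i x) (S i y) = r i * dist x y)
    (F : Set (EuclideanSpace ℝ (Fin d))) (hFne : F.Nonempty) (hFc : IsCompact F)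
    (hFinv : F = ⋃ i, S i '' F)
    (hOSC : ∃ O : Set (EuclideanSpace ℝ (Fin d)), O.Nonempty ∧ IsOpen O ∧
      Bornology.IsBounded O ∧ (⋃ i, S i '' O) ⊆ O ∧
      ∀ i j, i ≠ j → Disjoint (S i '' O) (S j '' O))
    (D : ℝ) (hD : 0 < D) (hDd : D ≤ d) (hDsum : ∑ i, r i ^ D = 1) :
    ∃ M : ℝ, 0 < M ∧ ∀ ε ∈ Set.Ioc (0 : ℝ) 1,
      ENNReal.ofReal (ε ^ (D - d + 1)) *
        μH[((d : ℝ) - 1)] (frontier (Metric.cthickening ε F)) ≤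
        ENNReal.ofReal M :=
  rescaled_parallel_surface_uniformly_bounded_general d N hd S r hr hS F hFne hFc hFinv D hD hDsum
end

section
/- (Lemma 3.2, surface case k = d−1.) There is a constant c > 0 such that for all ε ∈ (0,R) and all σ ∈ Σ(ε), H^{d−1}(∂F_ε ∩ (S_σ F)_ε ∩ A^{σ,ε}) ≤ c ε^{d−1}, where A^{σ,ε} := ⋃_{ω ∈ Σ(ε), ω ≠ σ} (S_ω F)_ε. -/
/-!
Since `S_σ F ⊆ F`, a point of `∂F_ε ∩ (S_σ F)_ε` lies at distance exactly `ε` from both `F` and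
`K = S_σ F`, so the set to be measured lies in the level set `{x | dist(x, K) = ε}`. For
`σ ∈ Σ(ε)` the cylinder `K` has diameter at most `r_σ diam F < ε / √2 ≤ 3ε/4`, and then the
radial projection from a point `p₀ ∈ K` maps this level set into the unit sphere with an inverse
that is `9ε`-Lipschitz. Hence its `H^{d-1}`-measure is at most `(9ε)^{d-1} H^{d-1}(S^{d-1})`,
and `H^{d-1}(S^{d-1}) < ∞` because the sphere is covered by the radial projections of the
`2d` faces of the cube `[-1, 1]^d`, which are Lipschitz images of `[-1, 1]^{d-1}`.
-/

open MeasureTheory Filter Metric Set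

/-- For a word `ω = ω₁…ωₙ`, the product `r_ω = r_{ω₁} ⋯ r_{ωₙ}` of contraction
ratios (`r_∅ = 1`). -/
def wordRatio {N : ℕ} (r : Fin N → ℝ) (ω : List (Fin N)) : ℝ := (ω.map r).prod

/-- For a word `ω = ω₁…ωₙ`, the composed map `S_ω = S_{ω₁} ∘ ⋯ ∘ S_{ωₙ}`
(`S_∅ = id`). -/
def wordMap {N : ℕ} {E : Type*} (S : Fin N → E → E) (ω : List (Fin N)) : E → E :=
  ω.foldr (fun i g => S i ∘ g) id

/-- The family `Σ(ε)` of all words `ω = ω₁…ωₙ`, `n ≥ 1`, with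
`R r_ω < ε ≤ R r_{ω₁…ω_{n-1}}`. -/
def sigmaWords {N : ℕ} (r : Fin N → ℝ) (R ε : ℝ) : Set (List (Fin N)) :=
  {ω | ω ≠ [] ∧ R * wordRatio r ω < ε ∧ ε ≤ R * wordRatio r ω.dropLast}

open scoped NNReal ENNReal

theorem hausdorffMeasure_le_mul_hausdorffMeasure_image {X Y : Type*} [MetricSpace X]
    [MeasurableSpace X] [BorelSpace X] [MetricSpace Y] [MeasurableSpace Y] [BorelSpace Y]
    {d : ℝ} (hd : 0 ≤ d) {f : X → Y} {s : Set X} {K : ℝ≥0}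
    (hf : ∀ x ∈ s, ∀ y ∈ s, dist x y ≤ K * dist (f x) (f y)) :
    μH[d] s ≤ (K : ℝ≥0∞) ^ d * μH[d] (f '' s) := by
  have hK : AntilipschitzWith K (s.domRestrict f) :=
    AntilipschitzWith.of_le_mul_dist fun x y => hf x x.2 y y.2
  calc μH[d] s = μH[d] (univ : Set s) := by
        rw [← (isometry_subtype_coe (s := s)).hausdorffMeasure_image (Or.inl hd), image_univ,
          Subtype.range_coe]
    _ ≤ (K : ℝ≥0∞) ^ d * μH[d] (s.domRestrict f '' univ) := hK.le_hausdorffMeasure_image hd _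
    _ = (K : ℝ≥0∞) ^ d * μH[d] (f '' s) := by rw [image_univ, range_domRestrict]

theorem dist_normalize_le {V : Type*} [NormedAddCommGroup V] [InnerProductSpace ℝ V] {x y : V}
    (hx : 1 ≤ ‖x‖) (hy : 1 ≤ ‖y‖) :
    dist (NormedSpace.normalize x) (NormedSpace.normalize y) ≤ dist x y := by
  have hx0 : 0 < ‖x‖ := one_pos.trans_le hx
  have hy0 : 0 < ‖y‖ := one_pos.trans_le hy
  have hxy : inner ℝ x y ≤ ‖x‖ * ‖y‖ := real_inner_le_norm x y
  have hnormalize : dist (NormedSpace.normalize x) (NormedSpace.normalize y) ^ 2 * (‖x‖ * ‖y‖) =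
      2 * (‖x‖ * ‖y‖) - 2 * inner ℝ x y := by
    rw [dist_eq_norm, norm_sub_sq_real, NormedSpace.norm_normalize (norm_pos_iff.1 hx0),
      NormedSpace.norm_normalize (norm_pos_iff.1 hy0), NormedSpace.normalize,
      NormedSpace.normalize, real_inner_smul_left, real_inner_smul_right]
    field_simp
    ring
  have hdist : dist x y ^ 2 = ‖x‖ ^ 2 + ‖y‖ ^ 2 - 2 * inner ℝ x y := by
    rw [dist_eq_norm, norm_sub_sq_real]; ring
  refine le_of_pow_le_pow_left₀ two_ne_zero dist_nonneg ?_
  refine le_of_mul_le_mul_right ?_ (mul_pos hx0 hy0)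
  rw [hnormalize, hdist]
  have hxy1 : 1 ≤ ‖x‖ * ‖y‖ := one_le_mul_of_one_le_of_one_le hx hy
  nlinarith [mul_nonneg (mul_nonneg hx0.le hy0.le) (sq_nonneg (‖x‖ - ‖y‖)),
    mul_nonneg (sub_nonneg.2 hxy) (sub_nonneg.2 hxy1)]

noncomputable def projCubeFace {m : ℕ} (i : Fin (m + 1)) (c : ℝ) (y : Fin m → ℝ) :
    EuclideanSpace ℝ (Fin (m + 1)) :=
  NormedSpace.normalize (WithLp.toLp 2 (Fin.insertNth i c y))

theorem lipschitzWith_projCubeFace {m : ℕ} (i : Fin (m + 1)) {c : ℝ} (hc : |c| = 1) :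
    LipschitzWith ((m + 1 : ℝ≥0) ^ (1 / 2 : ℝ)) (projCubeFace i c) := by
  have htoLp := PiLp.lipschitzWith_toLp 2 (fun _ : Fin (m + 1) => ℝ)
  simp only [Fintype.card_fin, Nat.cast_add, Nat.cast_one, ENNReal.toReal_div, ENNReal.toReal_one,
    ENNReal.toReal_ofNat] at htoLp
  have hnorm (y : Fin m → ℝ) :
      1 ≤ ‖(WithLp.toLp 2 (Fin.insertNth i c y) : EuclideanSpace ℝ (Fin (m + 1)))‖ := by
    simpa [hc] using PiLp.norm_apply_le (WithLp.toLp 2 (Fin.insertNth (α := fun _ => ℝ) i c y)) i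
  refine LipschitzWith.of_dist_le_mul fun y y' => ?_
  calc dist (projCubeFace i c y) (projCubeFace i c y')
      ≤ dist (WithLp.toLp 2 (Fin.insertNth i c y) : EuclideanSpace ℝ (Fin (m + 1)))
          (WithLp.toLp 2 (Fin.insertNth i c y')) := dist_normalize_le (hnorm y) (hnorm y')
    _ ≤ (m + 1 : ℝ≥0) ^ (1 / 2 : ℝ) *
          dist (Fin.insertNth (α := fun _ => ℝ) i c y) (Fin.insertNth i c y') :=
        htoLp.dist_le_mul _ _
    _ = (m + 1 : ℝ≥0) ^ (1 / 2 : ℝ) * dist y y' := by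
        rw [Fin.dist_insertNth_insertNth, dist_self, max_eq_right dist_nonneg]

theorem sphere_subset_iUnion_projCubeFace (m : ℕ) :
    sphere (0 : EuclideanSpace ℝ (Fin (m + 1))) 1 ⊆
      ⋃ (i : Fin (m + 1)) (c ∈ ({-1, 1} : Set ℝ)), projCubeFace i c '' closedBall 0 1 := by
  intro u hu
  rw [mem_sphere_zero_iff_norm] at hu
  obtain ⟨i, hi⟩ := Finite.exists_max fun j => |u j|
  have ha : 0 < |u i| := by
    by_contra! h
    have : u = 0 := by
      ext j
      simpa using (hi j).trans h
    simp [this] at hu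
  simp only [mem_iUnion]
  refine ⟨i, u i / |u i|, ?_, fun k => u (i.succAbove k) / |u i|, ?_, ?_⟩
  · have hui : u i ≠ 0 := abs_pos.1 ha
    rcases abs_choice (u i) with h | h <;> rw [h] <;> simp [hui]
  · rw [mem_closedBall_zero_iff, pi_norm_le_iff_of_nonneg zero_le_one]
    intro k
    rw [Real.norm_eq_abs, abs_div, abs_abs]
    exact div_le_one_of_le₀ (hi _) ha.le
  · have : (WithLp.toLp 2 (Fin.insertNth i (u i / |u i|) fun k => u (i.succAbove k) / |u i|) :
        EuclideanSpace ℝ (Fin (m + 1))) = |u i|⁻¹ • u := by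
      ext j
      cases j using Fin.succAboveCases i <;> simp [div_eq_inv_mul]
    rw [projCubeFace, this, NormedSpace.normalize_smul_of_pos (inv_pos.2 ha),
      NormedSpace.normalize_eq_self_of_norm_eq_one hu]

theorem hausdorffMeasure_sphere_lt_top (m : ℕ) :
    μH[m] (sphere (0 : EuclideanSpace ℝ (Fin (m + 1))) 1) < ⊤ := by
  have hvol : (μH[m] : Measure (Fin m → ℝ)) = volume := by
    simpa using hausdorffMeasure_pi_real (ι := Fin m)
  have hface : ∀ i : Fin (m + 1), ∀ c ∈ ({-1, 1} : Set ℝ),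
      μH[m] (projCubeFace i c '' closedBall 0 1) < ⊤ := by
    intro i c hc
    have hc : |c| = 1 := by rcases hc with rfl | rfl <;> simp
    refine ((lipschitzWith_projCubeFace i hc).hausdorffMeasure_image_le m.cast_nonneg _).trans_lt
      ?_
    rw [hvol]
    exact ENNReal.mul_lt_top (by simp) measure_closedBall_lt_top
  refine (measure_mono (sphere_subset_iUnion_projCubeFace m)).trans_lt ?_
  exact (measure_iUnion_fintype_le _ _).trans_lt
    (ENNReal.sum_lt_top.2 fun i _ => measure_biUnion_lt_top (toFinite _) (hface i))

section LevelSet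

variable {E : Type*} [NormedAddCommGroup E] [InnerProductSpace ℝ E] {K : Set E} {p₀ x y : E}
  {ε : ℝ}

theorem norm_normalize_sub_of_infDist_eq (hp₀ : p₀ ∈ K) (hε : ε ≠ 0) (hx : infDist x K = ε) :
    ‖NormedSpace.normalize (x - p₀)‖ = 1 := by
  refine NormedSpace.norm_normalize (sub_ne_zero.2 fun h => hε ?_)
  rw [← hx, h, infDist_zero_of_mem hp₀]

theorem add_div_four_le_infDist_add_smul_normalize (hK : Bornology.IsBounded K) (hp₀ : p₀ ∈ K)
    (hε : 0 < ε) (hdiam : 4 * diam K ≤ 3 * ε) (hy : ε ≤ infDist y K) {m : ℝ} (hm : 0 ≤ m) :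
    ε + m / 4 ≤ infDist (y + m • NormedSpace.normalize (y - p₀)) K := by
  set v := NormedSpace.normalize (y - p₀)
  have hyp₀ : ε ≤ ‖y - p₀‖ := (hy.trans (infDist_le_dist_of_mem hp₀)).trans_eq (dist_eq_norm _ _)
  have hv : ‖v‖ = 1 := NormedSpace.norm_normalize (norm_pos_iff.1 (hε.trans_le hyp₀))
  have hyv : inner ℝ (y - p₀) v = ‖y - p₀‖ := by
    rw [show v = ‖y - p₀‖⁻¹ • (y - p₀) from rfl, real_inner_smul_right,
      real_inner_self_eq_norm_sq]
    field_simp [(hε.trans_le hyp₀).ne']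
  rw [le_infDist ⟨p₀, hp₀⟩]
  intro q hq
  have hyq : ε ≤ ‖y - q‖ := (hy.trans (infDist_le_dist_of_mem hq)).trans_eq (dist_eq_norm _ _)
  have hqp₀ : inner ℝ (q - p₀) v ≤ 3 / 4 * ε := by
    calc inner ℝ (q - p₀) v ≤ ‖q - p₀‖ * ‖v‖ := real_inner_le_norm _ _
      _ ≤ diam K := by rw [hv, mul_one, ← dist_eq_norm]; exact dist_le_diam_of_mem hK hq hp₀
      _ ≤ 3 / 4 * ε := by linarith
  have hinner : ε / 4 ≤ inner ℝ (y - q) v := by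
    have : y - q = (y - p₀) - (q - p₀) := by abel
    rw [this, inner_sub_left, hyv]
    linarith
  have hsq : (ε + m / 4) ^ 2 ≤ ‖y + m • v - q‖ ^ 2 := by
    rw [show y + m • v - q = (y - q) + m • v by abel, norm_add_sq_real, real_inner_smul_right,
      norm_smul, Real.norm_eq_abs, abs_of_nonneg hm, hv]
    nlinarith [mul_le_mul_of_nonneg_left hinner hm]
  rw [dist_eq_norm]
  exact le_of_pow_le_pow_left₀ two_ne_zero (norm_nonneg _) hsq

theorem dist_le_mul_dist_normalize (hK : Bornology.IsBounded K) (hp₀ : p₀ ∈ K) (hε : 0 < ε)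
    (hdiam : 4 * diam K ≤ 3 * ε) (hx : infDist x K = ε) (hy : infDist y K = ε) :
    dist x y ≤
      9 * ε * dist (NormedSpace.normalize (x - p₀)) (NormedSpace.normalize (y - p₀)) := by
  wlog hyx : ‖y - p₀‖ ≤ ‖x - p₀‖ generalizing x y
  · rw [dist_comm, dist_comm (NormedSpace.normalize _)]
    exact this hy hx (le_of_not_ge hyx)
  have hgrowth := add_div_four_le_infDist_add_smul_normalize hK hp₀ hε hdiam hy.ge
    (sub_nonneg.2 hyx)
  have hs := dist_le_infDist_add_diam (x := x) hK hp₀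
  have ht := dist_le_infDist_add_diam (x := y) hK hp₀
  have hxu := NormedSpace.norm_smul_normalize (x - p₀)
  have hyv := NormedSpace.norm_smul_normalize (y - p₀)
  rw [dist_eq_norm, hx] at hs
  rw [dist_eq_norm, hy] at ht
  have ht0 := norm_nonneg (y - p₀)
  have hu := norm_normalize_sub_of_infDist_eq hp₀ hε.ne' hx
  generalize ‖x - p₀‖ = s at *
  generalize ‖y - p₀‖ = t at *
  generalize NormedSpace.normalize (x - p₀) = u at *
  generalize NormedSpace.normalize (y - p₀) = v at *
  obtain rfl : x = p₀ + s • u := by rw [hxu]; abel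
  obtain rfl : y = p₀ + t • v := by rw [hyv]; abel
  have hw0 : 0 ≤ dist u v := dist_nonneg
  -- `y + (s - t) • v` lies on the ray through `y` at the same distance `s` from `p₀` as `x`
  have hshift : infDist (p₀ + t • v + (s - t) • v) K ≤ ε + s * dist u v := by
    calc infDist (p₀ + t • v + (s - t) • v) K
        ≤ infDist (p₀ + s • u) K + dist (p₀ + t • v + (s - t) • v) (p₀ + s • u) :=
          infDist_le_infDist_add_dist
      _ = ε + s * dist u v := by
          rw [hx, dist_comm, dist_eq_norm, dist_eq_norm, ← norm_smul_of_nonneg (by linarith)]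
          congr 2
          module
  calc dist (p₀ + s • u) (p₀ + t • v) = ‖(s - t) • u + t • (u - v)‖ := by
        rw [dist_eq_norm]; congr 1; module
    _ ≤ (s - t) + t * dist u v := by
        refine (norm_add_le _ _).trans_eq ?_
        rw [norm_smul_of_nonneg (sub_nonneg.2 hyx), norm_smul_of_nonneg ht0, ← dist_eq_norm, hu,
          mul_one]
    _ ≤ 9 * ε * dist u v := by
        -- `hgrowth` and `hshift` give `s - t ≤ 4 * s * dist u v`
        nlinarith [mul_le_mul_of_nonneg_right hs hw0, mul_le_mul_of_nonneg_right ht hw0]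

theorem hausdorffMeasure_infDist_eq_le [MeasurableSpace E] [BorelSpace E] {e : ℝ} (he : 0 ≤ e)
    (hK : Bornology.IsBounded K) (hKne : K.Nonempty) (hε : 0 < ε) (hdiam : 4 * diam K ≤ 3 * ε) :
    μH[e] {x | infDist x K = ε} ≤ ENNReal.ofReal (9 * ε) ^ e * μH[e] (sphere (0 : E) 1) := by
  obtain ⟨p₀, hp₀⟩ := hKne
  have hproj : (fun x => NormedSpace.normalize (x - p₀)) '' {x | infDist x K = ε} ⊆
      sphere 0 1 := by
    rintro _ ⟨x, hx, rfl⟩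
    exact mem_sphere_zero_iff_norm.2 (norm_normalize_sub_of_infDist_eq hp₀ hε.ne' hx)
  calc μH[e] {x | infDist x K = ε}
      ≤ ENNReal.ofReal (9 * ε) ^ e *
          μH[e] ((fun x => NormedSpace.normalize (x - p₀)) '' {x | infDist x K = ε}) := by
        refine hausdorffMeasure_le_mul_hausdorffMeasure_image he fun x hx y hy => ?_
        rw [Real.coe_toNNReal _ (by positivity)]
        exact dist_le_mul_dist_normalize hK hp₀ hε hdiam hx hy
    _ ≤ ENNReal.ofReal (9 * ε) ^ e * μH[e] (sphere (0 : E) 1) := by gcongr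

end LevelSet

theorem frontier_cthickening_inter_cthickening_subset {X : Type*} [PseudoMetricSpace X]
    {K F : Set X} (hKF : K ⊆ F) {ε : ℝ} (hε : 0 ≤ ε) :
    frontier (cthickening ε F) ∩ cthickening ε K ⊆ {x | infDist x K = ε} := by
  rintro x ⟨hxF, hxK⟩
  have hF : infEDist x F = ENNReal.ofReal ε := frontier_cthickening_subset F hxF
  have hK : infEDist x K = ENNReal.ofReal ε :=
    le_antisymm (mem_cthickening_iff.1 hxK) (hF ▸ infEDist_anti hKF)
  simp [infDist, hK, hε]

section Words

variable {N : ℕ} {X : Type*} {S : Fin N → X → X} {r : Fin N → ℝ}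

@[simp]
theorem wordMap_cons (i : Fin N) (ω : List (Fin N)) : wordMap S (i :: ω) = S i ∘ wordMap S ω :=
  rfl

@[simp]
theorem wordRatio_cons (i : Fin N) (ω : List (Fin N)) :
    wordRatio r (i :: ω) = r i * wordRatio r ω := by
  simp [wordRatio]

theorem wordRatio_nonneg (hr : ∀ i, 0 ≤ r i) (ω : List (Fin N)) : 0 ≤ wordRatio r ω := by
  induction ω with
  | nil => simp [wordRatio]
  | cons i ω ih => rw [wordRatio_cons]; exact mul_nonneg (hr i) ih

theorem mapsTo_wordMap {F : Set X} (hF : ∀ i, MapsTo (S i) F F) (ω : List (Fin N)) :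
    MapsTo (wordMap S ω) F F := by
  induction ω with
  | nil => exact mapsTo_id F
  | cons i ω ih => exact (hF i).comp ih

variable [PseudoMetricSpace X]

theorem dist_wordMap (hS : ∀ i x y, dist (S i x) (S i y) = r i * dist x y)
    (ω : List (Fin N)) (x y : X) :
    dist (wordMap S ω x) (wordMap S ω y) = wordRatio r ω * dist x y := by
  induction ω with
  | nil => simp [wordMap, wordRatio]
  | cons i ω ih => rw [wordMap_cons, wordRatio_cons, Function.comp_apply, Function.comp_apply,
      hS, ih, mul_assoc]

theorem lipschitzWith_wordMap (hr : ∀ i, 0 ≤ r i)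
    (hS : ∀ i x y, dist (S i x) (S i y) = r i * dist x y) (ω : List (Fin N)) :
    LipschitzWith (wordRatio r ω).toNNReal (wordMap S ω) :=
  LipschitzWith.of_dist_le_mul fun x y => by
    rw [dist_wordMap hS, Real.coe_toNNReal _ (wordRatio_nonneg hr ω)]

theorem four_mul_diam_wordMap_image_le (hr : ∀ i, 0 ≤ r i)
    (hS : ∀ i x y, dist (S i x) (S i y) = r i * dist x y) {F : Set X}
    (hF : Bornology.IsBounded F) {R ε : ℝ} (hR : √2 * diam F < R) {σ : List (Fin N)}
    (hσ : R * wordRatio r σ < ε) : 4 * diam (wordMap S σ '' F) ≤ 3 * ε := by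
  have hσr := wordRatio_nonneg hr σ
  have hdiam : diam (wordMap S σ '' F) ≤ wordRatio r σ * diam F := by
    simpa [hσr] using (lipschitzWith_wordMap hr hS σ).diam_image_le F hF
  have hsqrt : 4 / 3 ≤ √2 := Real.le_sqrt_of_sq_le (by norm_num)
  nlinarith [hσ, mul_le_mul_of_nonneg_left hR.le hσr, diam_nonneg (s := wordMap S σ '' F),
    mul_le_mul_of_nonneg_left hdiam (Real.sqrt_nonneg 2)]

end Words

theorem surface_overlap_estimate_general
    (d N : ℕ) (hd : 1 ≤ d)
    (S : Fin N → EuclideanSpace ℝ (Fin d) → EuclideanSpace ℝ (Fin d))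
    (r : Fin N → ℝ) (hr : ∀ i, r i ∈ Set.Ioo (0 : ℝ) 1)
    (hS : ∀ i x y, dist (S i x) (S i y) = r i * dist x y)
    (F : Set (EuclideanSpace ℝ (Fin d))) (hFne : F.Nonempty) (hFc : IsCompact F)
    (hFinv : F = ⋃ i, S i '' F)
    (R : ℝ) (hR : Real.sqrt 2 * Metric.diam F < R) :
    ∃ c > (0 : ℝ), ∀ ε ∈ Set.Ioo (0 : ℝ) R, ∀ σ ∈ sigmaWords r R ε,
      μH[((d : ℝ) - 1)] (frontier (Metric.cthickening ε F) ∩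
          Metric.cthickening ε (wordMap S σ '' F) ∩
          ⋃ ω ∈ sigmaWords r R ε \ {σ}, Metric.cthickening ε (wordMap S ω '' F)) ≤
        ENNReal.ofReal (c * ε ^ ((d : ℝ) - 1)) := by
  obtain ⟨m, rfl⟩ := Nat.exists_eq_add_of_le' hd
  have hm : ((m + 1 : ℕ) : ℝ) - 1 = m := by push_cast; ring
  obtain ⟨M, hsphere, -⟩ := ENNReal.lt_iff_exists_nnreal_btwn.1 (hausdorffMeasure_sphere_lt_top m)
  have hM : 0 < (M : ℝ) := NNReal.coe_pos.2 (ENNReal.coe_pos.1 (pos_of_gt hsphere))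
  have hr₀ : ∀ i, 0 ≤ r i := fun i => (hr i).1.le
  have hFS : ∀ i, MapsTo (S i) F F := fun i x hx => by
    rw [hFinv]; exact mem_iUnion_of_mem i (mem_image_of_mem _ hx)
  refine ⟨9 ^ (m : ℝ) * M, by positivity, fun ε ⟨hε, _⟩ σ hσ => ?_⟩
  rw [hm]
  calc _ ≤ μH[m] {x | infDist x (wordMap S σ '' F) = ε} :=
        measure_mono <| inter_subset_left.trans <| frontier_cthickening_inter_cthickening_subset
          (mapsTo_wordMap hFS σ).image_subset hε.le
    _ ≤ ENNReal.ofReal (9 * ε) ^ (m : ℝ) * μH[m] (sphere 0 1) :=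
        hausdorffMeasure_infDist_eq_le m.cast_nonneg
          ((lipschitzWith_wordMap hr₀ hS σ).isBounded_image hFc.isBounded) (hFne.image _) hε
          (four_mul_diam_wordMap_image_le hr₀ hS hFc.isBounded hR hσ.2.1)
    _ ≤ ENNReal.ofReal (9 * ε) ^ (m : ℝ) * ENNReal.ofReal M := by
        rw [ENNReal.ofReal_coe_nnreal]; gcongr
    _ = ENNReal.ofReal (9 ^ (m : ℝ) * M * ε ^ (m : ℝ)) := by
        rw [ENNReal.ofReal_rpow_of_nonneg (by positivity) m.cast_nonneg,
          ← ENNReal.ofReal_mul (by positivity), Real.mul_rpow (by norm_num) hε.le]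
        congr 1
        ring

/-- Lemma 3.2 of Winter–Zähle, surface case `k = d-1`: the surface area of `F_ε`
in the overlap of `(S_σ F)_ε` with the union `A^{σ,ε}` of the other cylinder
neighborhoods is of order `ε^{d-1}`, uniformly in `ε ∈ (0,R)` and `σ ∈ Σ(ε)`. -/
theorem surface_overlap_estimate
    (d N : ℕ) (hd : 1 ≤ d) (hN : 2 ≤ N)
    (S : Fin N → EuclideanSpace ℝ (Fin d) → EuclideanSpace ℝ (Fin d))
    (r : Fin N → ℝ) (hr : ∀ i, r i ∈ Set.Ioo (0 : ℝ) 1)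
    (hS : ∀ i x y, dist (S i x) (S i y) = r i * dist x y)
    (F : Set (EuclideanSpace ℝ (Fin d))) (hFne : F.Nonempty) (hFc : IsCompact F)
    (hFinv : F = ⋃ i, S i '' F)
    (hOSC : ∃ O : Set (EuclideanSpace ℝ (Fin d)), O.Nonempty ∧ IsOpen O ∧
      Bornology.IsBounded O ∧ (⋃ i, S i '' O) ⊆ O ∧
      ∀ i j, i ≠ j → Disjoint (S i '' O) (S j '' O))
    (D : ℝ) (hD : 0 < D) (hDd : D ≤ d) (hDsum : ∑ i, r i ^ D = 1)
    (R : ℝ) (hR : Real.sqrt 2 * Metric.diam F < R) :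
    ∃ c > (0 : ℝ), ∀ ε ∈ Set.Ioo (0 : ℝ) R, ∀ σ ∈ sigmaWords r R ε,
      μH[((d : ℝ) - 1)] (frontier (Metric.cthickening ε F) ∩
          Metric.cthickening ε (wordMap S σ '' F) ∩
          ⋃ ω ∈ sigmaWords r R ε \ {σ}, Metric.cthickening ε (wordMap S ω '' F)) ≤
        ENNReal.ofReal (c * ε ^ ((d : ℝ) - 1)) :=
  surface_overlap_estimate_general d N hd S r hr hS F hFne hFc hFinv R hR
end
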